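/- arXiv:1604.07100 — 3 statements merged into one kernel-verified Lean document; each statement's English description precedes it below -/
import Mathlib

section
/- Let G be a graph and let G^s be the graph obtained from G by subdividing every edge exactly twice (replacing each edge by a path with two new internal vertices). Then G has a vertex cover of size k if and only if G^s has a vertex cover of size |E(G)| + k. -/
/-!
Along the path `u - (e,u) - (e,v) - v` replacing an edge `e = uv`, a cover of `G` with `u ∈ C`
extends by the single vertex `(e,v)`, so `|E(G)|` extra vertices suffice. Conversely, a cover of
the subdivided graph contains some `(e, d e)` on each middle edge; deleting these `|E(G)|`
vertices and projecting the rest to `V` (`inl u ↦ u`, `(e,u) ↦ u`) gives a cover of `G`, because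
the edge `u - (e,u)` with `d e = v` is covered by a vertex that survives and projects to `u`.
-/

/-- `C` is a vertex cover of `G`: every edge has at least one endpoint in `C`. -/
def IsVertexCover {V : Type} (G : SimpleGraph V) (C : Set V) : Prop :=
  ∀ ⦃u v : V⦄, G.Adj u v → u ∈ C ∨ v ∈ C

/-- Vertex type of the graph obtained from a graph on `V` by subdividing every edge
twice: original vertices, plus for each edge `e` and endpoint `u ∈ e` a new
subdivision vertex `(e, u)` attached next to `u`. -/
abbrev SubdivVert (V : Type) := V ⊕ (Sym2 V × V)

/-- The graph obtained from `G` by subdividing every edge exactly twice: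
each edge `{u,v}` is replaced by the path `u - (e,u) - (e,v) - v`. -/
def subdivTwice {V : Type} (G : SimpleGraph V) : SimpleGraph (SubdivVert V) where
  Adj x y :=
    (∃ u e, x = Sum.inl u ∧ y = Sum.inr (e, u) ∧ e ∈ G.edgeSet ∧ u ∈ e) ∨
    (∃ u e, y = Sum.inl u ∧ x = Sum.inr (e, u) ∧ e ∈ G.edgeSet ∧ u ∈ e) ∨
    (∃ e u v, x = Sum.inr (e, u) ∧ y = Sum.inr (e, v) ∧
      e ∈ G.edgeSet ∧ u ∈ e ∧ v ∈ e ∧ u ≠ v)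
  symm := by
    constructor
    rintro x y (h | h | ⟨e, u, v, hx, hy, he, hu, hv, huv⟩)
    · exact Or.inr (Or.inl h)
    · exact Or.inl h
    · exact Or.inr (Or.inr ⟨e, v, u, hy, hx, he, hv, hu, huv.symm⟩)
  loopless := by
    constructor
    rintro x (⟨u, e, hx, hy, _, _⟩ | ⟨u, e, hy, hx, _, _⟩ |
      ⟨e, u, v, hx, hy, _, _, _, huv⟩)
    · rw [hx] at hy; simp at hy
    · rw [hy] at hx; simp at hx
    · rw [hx] at hy; simp only [Sum.inr.injEq, Prod.mk.injEq] at hy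
      exact huv hy.2

open Finset

section

variable {V : Type} {G : SimpleGraph V}

theorem isVertexCover_subdivTwice_iff {C' : Set (SubdivVert V)} :
    IsVertexCover (subdivTwice G) C' ↔ ∀ ⦃u v⦄, G.Adj u v →
      (Sum.inl u ∈ C' ∨ Sum.inr (s(u, v), u) ∈ C') ∧
      (Sum.inr (s(u, v), u) ∈ C' ∨ Sum.inr (s(u, v), v) ∈ C') := by
  constructor
  · intro hC' u v huv
    have he : s(u, v) ∈ G.edgeSet := huv
    exact ⟨hC' (Or.inl ⟨u, _, rfl, rfl, he, Sym2.mem_mk_left u v⟩),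
      hC' (Or.inr (Or.inr ⟨_, u, v, rfl, rfl, he, Sym2.mem_mk_left u v,
        Sym2.mem_mk_right u v, huv.ne⟩))⟩
  · intro hC'
    have hend : ∀ ⦃u e⦄, e ∈ G.edgeSet → u ∈ e →
        Sum.inl u ∈ C' ∨ Sum.inr (e, u) ∈ C' := by
      intro u e he hu
      obtain ⟨w, rfl⟩ := Sym2.mem_iff_exists.mp hu
      exact (hC' he).1
    intro x y hxy
    rcases hxy with ⟨u, e, rfl, rfl, he, hu⟩ | ⟨u, e, rfl, rfl, he, hu⟩ |
      ⟨e, u, v, rfl, rfl, he, hu, hv, huv⟩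
    · exact hend he hu
    · exact (hend he hu).symm
    · obtain rfl := (Sym2.mem_and_mem_iff huv).mp ⟨hu, hv⟩
      exact (hC' he).2

theorem IsVertexCover.exists_subdivTwice_card_le [Fintype G.edgeSet] {C : Finset V}
    (hC : IsVertexCover G C) :
    ∃ C' : Finset (SubdivVert V), IsVertexCover (subdivTwice G) C' ∧
      #C' ≤ #C + #G.edgeFinset := by
  classical
  have hpick : ∀ e : Sym2 V, ∃ w ∈ e, e ∈ G.edgeSet → ∀ u ∈ e, u ∈ C ∨ w = u := by
    refine Sym2.ind fun a b => ?_
    by_cases ha : a ∈ C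
    · exact ⟨b, Sym2.mem_mk_right a b, fun _ u hu => by grind⟩
    · refine ⟨a, Sym2.mem_mk_left a b, fun hab u hu => ?_⟩
      have := hC (u := a) (v := b) hab
      grind
  choose p hp_mem hp_cover using hpick
  refine ⟨C.image Sum.inl ∪ G.edgeFinset.image fun e => Sum.inr (e, p e), ?_, ?_⟩
  · refine isVertexCover_subdivTwice_iff.mpr fun u v huv => ?_
    have he : s(u, v) ∈ G.edgeSet := huv
    have hsub : Sum.inr (s(u, v), p s(u, v)) ∈
        (C.image Sum.inl ∪ G.edgeFinset.image fun e => Sum.inr (e, p e) : Finset _) :=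
      mem_union_right _ (mem_image_of_mem _ (SimpleGraph.mem_edgeFinset.mpr he))
    rcases hp_cover _ he u (Sym2.mem_mk_left u v) with huC | hpu
    · rcases Sym2.mem_iff.mp (hp_mem s(u, v)) with hpu | hpv
      · rw [hpu] at hsub
        exact ⟨Or.inl (by simp [huC]), Or.inl hsub⟩
      · rw [hpv] at hsub
        exact ⟨Or.inl (by simp [huC]), Or.inr hsub⟩
    · rw [hpu] at hsub
      exact ⟨Or.inr hsub, Or.inl hsub⟩
  · calc #(C.image Sum.inl ∪ G.edgeFinset.image fun e => Sum.inr (e, p e))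
        ≤ #(C.image Sum.inl) + #(G.edgeFinset.image fun e => Sum.inr (e, p e)) :=
          card_union_le _ _
      _ ≤ #C + #G.edgeFinset := add_le_add card_image_le card_image_le

theorem IsVertexCover.exists_card_le_of_subdivTwice [Fintype G.edgeSet]
    {C' : Finset (SubdivVert V)} (hC' : IsVertexCover (subdivTwice G) C') :
    ∃ C : Finset V, IsVertexCover G C ∧ #C + #G.edgeFinset ≤ #C' := by
  classical
  have hcover := isVertexCover_subdivTwice_iff.mp hC'
  have hdrop : ∀ e : Sym2 V, ∃ w ∈ e, e ∈ G.edgeSet → Sum.inr (e, w) ∈ C' := by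
    refine Sym2.ind fun a b => ?_
    by_cases hab : G.Adj a b
    · rcases (hcover hab).2 with ha | hb
      · exact ⟨a, Sym2.mem_mk_left a b, fun _ => ha⟩
      · exact ⟨b, Sym2.mem_mk_right a b, fun _ => hb⟩
    · exact ⟨a, Sym2.mem_mk_left a b, fun h => absurd h hab⟩
  choose d hd_mem hd_cover using hdrop
  set D := G.edgeFinset.image fun e => (Sum.inr (e, d e) : SubdivVert V)
  have hD : D ⊆ C' :=
    image_subset_iff.mpr fun e he => hd_cover e (SimpleGraph.mem_edgeFinset.mp he)
  have hD_card : #D = #G.edgeFinset :=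
    card_image_of_injective _ fun e e' h => by simpa using congrArg Prod.fst (Sum.inr_injective h)
  refine ⟨(C' \ D).image (Sum.elim id Prod.snd), ?_, ?_⟩
  · have hleft : ∀ ⦃u v⦄, G.Adj u v → d s(u, v) = v →
        u ∈ ((C' \ D).image (Sum.elim id Prod.snd) : Finset V) := by
      intro u v huv hdv
      rcases (hcover huv).1 with hu | hu
      · exact mem_image.mpr ⟨Sum.inl u, by simpa [D] using hu, rfl⟩
      · refine mem_image.mpr ⟨_, mem_sdiff.mpr ⟨hu, ?_⟩, rfl⟩
        simp only [D, mem_image, Sum.inr.injEq, Prod.mk.injEq, not_exists, not_and]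
        rintro e - rfl hdu
        exact huv.ne (hdu.symm.trans hdv)
    intro u v huv
    rcases Sym2.mem_iff.mp (hd_mem s(u, v)) with hdu | hdv
    · exact Or.inr (hleft huv.symm (Sym2.eq_swap ▸ hdu))
    · exact Or.inl (hleft huv hdv)
  · calc #((C' \ D).image (Sum.elim id Prod.snd)) + #G.edgeFinset
        ≤ #(C' \ D) + #D := add_le_add card_image_le hD_card.ge
      _ = #C' := card_sdiff_add_card_eq_card hD

end

/-- `G` has a vertex cover of size `k` iff the twice-subdivided graph `G^s`
has a vertex cover of size `|E(G)| + k`. -/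
theorem vertexCover_iff_subdivTwice {V : Type} [Fintype V] [DecidableEq V]
    (G : SimpleGraph V) [DecidableRel G.Adj] (k : ℕ) :
    (∃ C : Finset V, IsVertexCover G ↑C ∧ C.card ≤ k) ↔
    (∃ C' : Finset (SubdivVert V), IsVertexCover (subdivTwice G) ↑C' ∧
      C'.card ≤ G.edgeFinset.card + k) := by
  constructor
  · rintro ⟨C, hC, hCk⟩
    obtain ⟨C', hC', hC'card⟩ := hC.exists_subdivTwice_card_le
    exact ⟨C', hC', hC'card.trans (by omega)⟩
  · rintro ⟨C', hC', hC'k⟩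
    obtain ⟨C, hC, hCcard⟩ := hC'.exists_card_le_of_subdivTwice
    exact ⟨C, hC, by omega⟩
end

section
/- If the graph G^s obtained from a finite simple graph G by subdividing every edge exactly twice has a vertex cover of size m, then G has a vertex cover of size at most m - |E(G)|. -/
/-!
Each edge `uv` of `G` becomes the path `u - a - b - v` in `G^s`. A cover `C'` of `G^s` contains
at least one of `a, b` (to cover the middle edge), and both of them when neither `u` nor `v`
is in `C'`. So `C'` has at least `|E(G)| + k` subdivision vertices, where `k` is the number of
edges of `G` left uncovered by the original vertices of `C'`; adding one endpoint of each of
these `k` edges to those original vertices gives a cover of `G` of size at most `m - |E(G)|`.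
-/

open Finset

section Patch

variable {V : Type} [Fintype V] [DecidableEq V] (G : SimpleGraph V) [DecidableRel G.Adj]

def uncoveredEdges (A : Finset V) : Finset (Sym2 V) :=
  {e ∈ G.edgeFinset | ∀ u ∈ e, u ∉ A}

theorem isVertexCover_union_image_out_uncoveredEdges (A : Finset V) :
    IsVertexCover G ↑(A ∪ (uncoveredEdges G A).image fun e => e.out.1) := by
  intro u v huv
  by_cases hu : u ∈ A
  · simp [hu]
  by_cases hv : v ∈ A
  · simp [hv]
  have he : s(u, v) ∈ uncoveredEdges G A := by
    simp only [uncoveredEdges, mem_filter, SimpleGraph.mem_edgeFinset, Sym2.mem_iff,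
      forall_eq_or_imp, forall_eq]
    exact ⟨huv, hu, hv⟩
  have hout : (s(u, v)).out.1 ∈ A ∪ (uncoveredEdges G A).image fun e => e.out.1 :=
    mem_union_right _ (mem_image_of_mem _ he)
  rcases Sym2.mem_iff.1 (Sym2.out_fst_mem s(u, v)) with h | h
  · exact Or.inl (h ▸ hout)
  · exact Or.inr (h ▸ hout)

theorem card_union_image_out_uncoveredEdges_le (A : Finset V) :
    #(A ∪ (uncoveredEdges G A).image fun e => e.out.1) ≤ #A + #(uncoveredEdges G A) :=
  (card_union_le _ _).trans (Nat.add_le_add_left card_image_le _)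

end Patch

namespace IsVertexCover

variable {V : Type} {G : SimpleGraph V} {C : Set (SubdivVert V)}

theorem inr_mem_of_inl_notMem (hC : IsVertexCover (subdivTwice G) C) {e : Sym2 V} {u : V}
    (he : e ∈ G.edgeSet) (hu : u ∈ e) (huC : Sum.inl u ∉ C) : Sum.inr (e, u) ∈ C :=
  (hC (Or.inl ⟨u, e, rfl, rfl, he, hu⟩)).resolve_left huC

theorem inr_mem_or_inr_mem (hC : IsVertexCover (subdivTwice G) C) {u v : V} (huv : G.Adj u v) :
    Sum.inr (s(u, v), u) ∈ C ∨ Sum.inr (s(u, v), v) ∈ C :=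
  hC (Or.inr (Or.inr ⟨s(u, v), u, v, rfl, rfl, huv, Sym2.mem_mk_left u v,
    Sym2.mem_mk_right u v, huv.ne⟩))

end IsVertexCover

section Counting

variable {V : Type} [Fintype V] [DecidableEq V] {G : SimpleGraph V} {C' : Finset (SubdivVert V)}

theorem one_add_ite_le_card_filter_toRight (hC' : IsVertexCover (subdivTwice G) ↑C')
    {e : Sym2 V} (he : e ∈ G.edgeSet) :
    1 + (if ∀ u ∈ e, u ∉ C'.toLeft then 1 else 0) ≤ #{p ∈ C'.toRight | p.1 = e} := by
  induction e using Sym2.ind with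
  | _ u v =>
    have mem_fiber : ∀ w, Sum.inr (s(u, v), w) ∈ C' →
        (s(u, v), w) ∈ ({p ∈ C'.toRight | p.1 = s(u, v)} : Finset _) := by
      intro w hw
      simp [hw]
    split_ifs with hunc
    · simp only [Sym2.mem_iff, forall_eq_or_imp, forall_eq, mem_toLeft] at hunc
      refine one_lt_card.2 ⟨_, mem_fiber u (hC'.inr_mem_of_inl_notMem he
        (Sym2.mem_mk_left u v) hunc.1), _, mem_fiber v (hC'.inr_mem_of_inl_notMem he
        (Sym2.mem_mk_right u v) hunc.2), ?_⟩
      simpa using (G.mem_edgeSet.1 he).ne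
    · rcases hC'.inr_mem_or_inr_mem he with h | h
      · exact card_pos.2 ⟨_, mem_fiber u h⟩
      · exact card_pos.2 ⟨_, mem_fiber v h⟩

theorem card_edgeFinset_add_card_uncoveredEdges_le [DecidableRel G.Adj]
    (hC' : IsVertexCover (subdivTwice G) ↑C') :
    #G.edgeFinset + #(uncoveredEdges G C'.toLeft) ≤ #C'.toRight := by
  calc #G.edgeFinset + #(uncoveredEdges G C'.toLeft)
      = ∑ e ∈ G.edgeFinset, (1 + if ∀ u ∈ e, u ∉ C'.toLeft then 1 else 0) := by
        rw [sum_add_distrib, card_eq_sum_ones, uncoveredEdges, card_filter]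
    _ ≤ ∑ e ∈ G.edgeFinset, #{p ∈ C'.toRight | p.1 = e} :=
        sum_le_sum fun e he =>
          one_add_ite_le_card_filter_toRight hC' (SimpleGraph.mem_edgeFinset.1 he)
    _ = #{p ∈ C'.toRight | p.1 ∈ G.edgeFinset} := sum_card_fiberwise_eq_card_filter _ _ _
    _ ≤ #C'.toRight := card_filter_le _ _

end Counting

/-- If the twice-subdivided graph `G^s` has a vertex cover of size `m`, then `G`
has a vertex cover of size at most `m - |E(G)|`. -/
theorem vertexCover_of_subdivTwice_vertexCover {V : Type} [Fintype V] [DecidableEq V]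
    (G : SimpleGraph V) [DecidableRel G.Adj] (m : ℕ)
    (h : ∃ C' : Finset (SubdivVert V), IsVertexCover (subdivTwice G) ↑C' ∧ C'.card = m) :
    ∃ C : Finset V, IsVertexCover G ↑C ∧ C.card ≤ m - G.edgeFinset.card := by
  obtain ⟨C', hC', rfl⟩ := h
  refine ⟨_, isVertexCover_union_image_out_uncoveredEdges G C'.toLeft, ?_⟩
  have hcount := card_edgeFinset_add_card_uncoveredEdges_le hC'
  have hsplit := card_toLeft_add_card_toRight (u := C')
  have hpatch := card_union_image_out_uncoveredEdges_le G C'.toLeft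
  omega
end

section
/- Let H be a bipartite-like graph with vertex classes U, R, Γ and edges only between U and R and between Γ and R. Define: a set S ⊆ Γ is a restricted distance-2-dominating set if every u ∈ U has a path of length exactly 2 in H to some γ ∈ S. Then a point u ∈ U is r-guarded by guard γ ∈ Γ (meaning some maximal rectangle ρ ∈ R contains u and intersects γ) if and only if there is a path of length 2 from u to γ in H. Consequently, the (U,Γ,P)-rGuarding problem has a solution of size k if and only if H has a restricted distance-2-dominating set of size k. -/
open Set

/-- The minimal closed axis-aligned rectangle spanned by two points `g, p ∈ ℝ²`. -/
def spanRect (g p : ℝ × ℝ) : Set (ℝ × ℝ) :=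
  Set.Icc (min g.1 p.1) (max g.1 p.1) ×ˢ Set.Icc (min g.2 p.2) (max g.2 p.2)

/-- `g` r-guards `p` relative to `P` iff the spanned rectangle lies inside `P`. -/
def RGuards (P : Set (ℝ × ℝ)) (g p : ℝ × ℝ) : Prop := spanRect g p ⊆ P

/-- `R` is a (closed) axis-aligned rectangle. -/
def IsRect (R : Set (ℝ × ℝ)) : Prop :=
  ∃ a b c d, R = Set.Icc a b ×ˢ Set.Icc c d

/-- `ρ` is a maximal axis-aligned rectangle inside `P`. -/
def MaxRect (P ρ : Set (ℝ × ℝ)) : Prop :=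
  IsRect ρ ∧ ρ ⊆ P ∧ ∀ ρ', IsRect ρ' → ρ ⊆ ρ' → ρ' ⊆ P → ρ' = ρ

/-- Guard `γ` (a subset of `P`) r-guards the point `u`. -/
def GuardsPt (P γ : Set (ℝ × ℝ)) (u : ℝ × ℝ) : Prop :=
  ∃ g ∈ γ, spanRect g u ⊆ P

theorem left_mem_spanRect (g p : ℝ × ℝ) : g ∈ spanRect g p :=
  ⟨⟨min_le_left _ _, le_max_left _ _⟩, min_le_left _ _, le_max_left _ _⟩

theorem right_mem_spanRect (g p : ℝ × ℝ) : p ∈ spanRect g p :=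
  ⟨⟨min_le_right _ _, le_max_right _ _⟩, min_le_right _ _, le_max_right _ _⟩

theorem isRect_spanRect (g p : ℝ × ℝ) : IsRect (spanRect g p) :=
  ⟨_, _, _, _, rfl⟩

theorem IsRect.spanRect_subset {R : Set (ℝ × ℝ)} (hR : IsRect R) {g p : ℝ × ℝ}
    (hg : g ∈ R) (hp : p ∈ R) : spanRect g p ⊆ R := by
  obtain ⟨a, b, c, d, rfl⟩ := hR
  obtain ⟨⟨hga, hgb⟩, hgc, hgd⟩ := hg
  obtain ⟨⟨hpa, hpb⟩, hpc, hpd⟩ := hp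
  exact prod_mono (Icc_subset_Icc (le_min hga hpa) (max_le hgb hpb))
    (Icc_subset_Icc (le_min hgc hpc) (max_le hgd hpd))

theorem guardsPt_iff_exists_maxRect {P : Set (ℝ × ℝ)}
    (hext : ∀ R, IsRect R → R ⊆ P → ∃ ρ, MaxRect P ρ ∧ R ⊆ ρ) (γ : Set (ℝ × ℝ)) (u : ℝ × ℝ) :
    GuardsPt P γ u ↔ ∃ ρ, MaxRect P ρ ∧ u ∈ ρ ∧ (γ ∩ ρ).Nonempty := by
  constructor
  · rintro ⟨g, hgγ, hspan⟩
    obtain ⟨ρ, hρ, hspanρ⟩ := hext _ (isRect_spanRect g u) hspan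
    exact ⟨ρ, hρ, hspanρ (right_mem_spanRect g u), g, hgγ, hspanρ (left_mem_spanRect g u)⟩
  · rintro ⟨ρ, ⟨hρ, hρP, -⟩, huρ, g, hgγ, hgρ⟩
    exact ⟨g, hgγ, (hρ.spanRect_subset hgρ huρ).trans hρP⟩

theorem rGuarding_iff_dist2dominating_general (P : Set (ℝ × ℝ))
    (U : Finset (ℝ × ℝ)) (Γ : Finset (Set (ℝ × ℝ)))
    (hext : ∀ R, IsRect R → R ⊆ P → ∃ ρ, MaxRect P ρ ∧ R ⊆ ρ) :
    (∀ u ∈ U, ∀ γ ∈ Γ,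
      (GuardsPt P γ u ↔ ∃ ρ, MaxRect P ρ ∧ u ∈ ρ ∧ (γ ∩ ρ).Nonempty)) ∧
    (∀ k : ℕ,
      (∃ S ⊆ Γ, S.card = k ∧ ∀ u ∈ U, ∃ γ ∈ S, GuardsPt P γ u) ↔
      (∃ S ⊆ Γ, S.card = k ∧ ∀ u ∈ U, ∃ γ ∈ S,
        ∃ ρ, MaxRect P ρ ∧ u ∈ ρ ∧ (γ ∩ ρ).Nonempty)) := by
  refine ⟨fun u _ γ _ => guardsPt_iff_exists_maxRect hext γ u, fun k => ?_⟩
  simp only [guardsPt_iff_exists_maxRect hext]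

/-- In the auxiliary graph `H` on `U ∪ R ∪ Γ` (edges: `u–ρ` iff
`u ∈ ρ`, and `γ–ρ` iff `γ ∩ ρ ≠ ∅`, where `R` is the set of maximal rectangles
in `P`): a point `u ∈ U` is r-guarded by `γ ∈ Γ` iff there is a path of length 2
from `u` to `γ` in `H`; consequently, the `(U,Γ,P)`-rGuarding problem has a
solution of size `k` iff `H` has a restricted distance-2-dominating set of
size `k`. -/
theorem rGuarding_iff_dist2dominating (P : Set (ℝ × ℝ))
    (U : Finset (ℝ × ℝ)) (Γ : Finset (Set (ℝ × ℝ)))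
    (hU : ∀ u ∈ U, u ∈ P) (hΓ : ∀ γ ∈ Γ, γ ⊆ P)
    (hext : ∀ R, IsRect R → R ⊆ P → ∃ ρ, MaxRect P ρ ∧ R ⊆ ρ) :
    (∀ u ∈ U, ∀ γ ∈ Γ,
      (GuardsPt P γ u ↔ ∃ ρ, MaxRect P ρ ∧ u ∈ ρ ∧ (γ ∩ ρ).Nonempty)) ∧
    (∀ k : ℕ,
      (∃ S ⊆ Γ, S.card = k ∧ ∀ u ∈ U, ∃ γ ∈ S, GuardsPt P γ u) ↔
      (∃ S ⊆ Γ, S.card = k ∧ ∀ u ∈ U, ∃ γ ∈ S,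
        ∃ ρ, MaxRect P ρ ∧ u ∈ ρ ∧ (γ ∩ ρ).Nonempty)) :=
  rGuarding_iff_dist2dominating_general P U Γ hext
end
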